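/- arXiv:1703.09632 — 15 statements merged into one kernel-verified Lean document; each statement's English description precedes it below -/
import Mathlib

section
/- Let E be a category with finite limits, i : D ⥤ E a fully faithful functor admitting a left adjoint L, F = L ⋙ i the associated idempotent endofunctor with unit η, and assume F preserves finite limits. Then every morphism f : A ⟶ B in E admits a factorization f = v ∘ u in which u is an F-equivalence and v is F-local; concretely, one may take v : C ⟶ B to be the pullback of F f : F A ⟶ F B along η_B : B ⟶ F B, and u : A ⟶ C the map induced by f and η_A into this pullback. -/
/-!
Write `F = L ⋙ R` and `η` for the unit. Let `p, v` be the projections of the pullback `C` of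
`F f` along `η_B`. Since `F` preserves this pullback and `F η_B` is invertible, so is `F p`; as
`u ≫ p = η_A` and `F η_A` is invertible, `F u` is invertible. For locality, paste the naturality
square of `η` at `v` with the image under `F` of the defining square of `C`: the composite is the
defining square followed by the naturality square of `η` at `F f`, a pullback because its
horizontal sides `η_{F A}`, `η_{F B}` are invertible.
-/

open CategoryTheory Limits

namespace CategoryTheory.Adjunction

variable {C D : Type*} [Category C] [Category D] {L : C ⥤ D} {R : D ⥤ C} [R.Full] [R.Faithful]
  (adj : L ⊣ R)

lemma isIso_map_of_comp_eq_unit_app {A P : C} {u : A ⟶ P} {p : P ⟶ (L ⋙ R).obj A}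
    (hu : u ≫ p = adj.unit.app A) [IsIso ((L ⋙ R).map p)] : IsIso ((L ⋙ R).map u) := by
  have : IsIso ((L ⋙ R).map (u ≫ p)) := by
    rw [hu]; exact inferInstanceAs (IsIso (R.map (L.map (adj.unit.app A))))
  rw [Functor.map_comp] at this
  exact IsIso.of_isIso_comp_right _ ((L ⋙ R).map p)

section

variable {X B P : C} {g : X ⟶ (L ⋙ R).obj B} {p : P ⟶ X} {v : P ⟶ B}
  [PreservesLimit (cospan g (adj.unit.app B)) (L ⋙ R)]

lemma isIso_map_fst_of_isPullback_unit (h : IsPullback p v g (adj.unit.app B)) :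
    IsIso ((L ⋙ R).map p) :=
  (h.map (L ⋙ R)).isIso_fst_of_isIso (by dsimp; infer_instance)

lemma isPullback_unit_app_of_isPullback [IsIso (adj.unit.app X)]
    (h : IsPullback p v g (adj.unit.app B)) :
    IsPullback (adj.unit.app P) v ((L ⋙ R).map v) (adj.unit.app B) := by
  have : IsIso (adj.unit.app ((L ⋙ R).obj B)) := inferInstanceAs (IsIso (adj.unit.app (R.obj _)))
  have naturality_g : IsPullback (adj.unit.app X) g ((L ⋙ R).map g)
      (adj.unit.app ((L ⋙ R).obj B)) :=
    IsPullback.of_horiz_isIso ⟨(adj.unit.naturality g).symm⟩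
  have outer := h.paste_horiz naturality_g
  have top : p ≫ adj.unit.app X = adj.unit.app P ≫ (L ⋙ R).map p := adj.unit.naturality p
  have bottom : adj.unit.app B ≫ adj.unit.app ((L ⋙ R).obj B) =
      adj.unit.app B ≫ (L ⋙ R).map (adj.unit.app B) := adj.unit.naturality (adj.unit.app B)
  rw [top, bottom] at outer
  exact outer.of_right (adj.unit.naturality v).symm (h.map (L ⋙ R))

end

end CategoryTheory.Adjunction

open CategoryTheory.Adjunction in
/-- For a reflective localization `L ⊣ i` with `F = L ⋙ i` preserving finite
limits, every morphism `f : A ⟶ B` factors as an `F`-equivalence followed by an `F`-local map;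
concretely one may take `v` to be the pullback of `F f` along the unit `η_B`, and `u` the map
induced by `f` and `η_A` into this pullback. -/
theorem goodwillie_stmt_0 {D E : Type*} [Category D] [Category E] [HasFiniteLimits E]
    (L : E ⥤ D) (i : D ⥤ E) [i.Full] [i.Faithful] (adj : L ⊣ i)
    [PreservesFiniteLimits (L ⋙ i)]
    {A B : E} (f : A ⟶ B) :
    letI F : E ⥤ E := L ⋙ i
    letI η : 𝟭 E ⟶ F := adj.unit
    letI C : E := pullback (F.map f) (η.app B)
    letI v : C ⟶ B := pullback.snd (F.map f) (η.app B)
    letI u : A ⟶ C := pullback.lift (η.app A) f (by simpa using (η.naturality f).symm)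
    u ≫ v = f ∧ IsIso (F.map u) ∧ IsPullback (η.app C) v (F.map v) (η.app B) := by
  have hC := IsPullback.of_hasPullback ((L ⋙ i).map f) (adj.unit.app B)
  have : IsIso (adj.unit.app ((L ⋙ i).obj A)) := inferInstanceAs (IsIso (adj.unit.app (i.obj _)))
  have := isIso_map_fst_of_isPullback_unit adj hC
  exact ⟨pullback.lift_snd _ _ _, isIso_map_of_comp_eq_unit_app adj (pullback.lift_fst _ _ _),
    isPullback_unit_app_of_isPullback adj hC⟩
end

section
/- Let E be a category with finite limits, i : D ⥤ E a fully faithful functor admitting a left adjoint L, F = L ⋙ i the associated idempotent endofunctor with unit η, and assume F preserves finite limits. Then F-equivalences are stable under base change: if f : A ⟶ B is an F-equivalence, g : B' ⟶ B is any morphism, and f' : A ×_B B' ⟶ B' is the pullback of f along g, then f' is an F-equivalence. -/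
open CategoryTheory Limits

theorem CategoryTheory.IsPullback.isIso_map_snd_of_isIso_map {C E : Type*} [Category C]
    [Category E] (F : C ⥤ E) {P X Y Z : C} {fst : P ⟶ X} {snd : P ⟶ Y} {f : X ⟶ Z}
    {g : Y ⟶ Z} (h : IsPullback fst snd f g) [PreservesLimit (cospan f g) F]
    [IsIso (F.map f)] : IsIso (F.map snd) :=
  (h.map F).isIso_snd_of_isIso

theorem goodwillie_stmt_1_general {D E : Type*} [Category D] [Category E]
    (L : E ⥤ D) (i : D ⥤ E)
    [PreservesFiniteLimits (L ⋙ i)]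
    {A B B' P : E} (f : A ⟶ B) (g : B' ⟶ B) (p : P ⟶ A) (f' : P ⟶ B')
    (sq : IsPullback p f' f g)
    (hf : IsIso ((L ⋙ i).map f)) :
    IsIso ((L ⋙ i).map f') :=
  sq.isIso_map_snd_of_isIso_map (L ⋙ i)

/-- For a reflective localization `L ⊣ i` with `F = L ⋙ i` preserving finite
limits, `F`-equivalences are stable under base change: any pullback of an `F`-equivalence along
an arbitrary morphism is again an `F`-equivalence. -/
theorem goodwillie_stmt_1 {D E : Type*} [Category D] [Category E] [HasFiniteLimits E]
    (L : E ⥤ D) (i : D ⥤ E) [i.Full] [i.Faithful] (adj : L ⊣ i)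
    [PreservesFiniteLimits (L ⋙ i)]
    {A B B' P : E} (f : A ⟶ B) (g : B' ⟶ B) (p : P ⟶ A) (f' : P ⟶ B')
    (sq : IsPullback p f' f g)
    (hf : IsIso ((L ⋙ i).map f)) :
    IsIso ((L ⋙ i).map f') :=
  goodwillie_stmt_1_general L i f g p f' sq hf
end

section
/- Let E be a category with finite limits, i : D ⥤ E a fully faithful functor admitting a left adjoint L, F = L ⋙ i the associated idempotent endofunctor with unit η, and assume F preserves finite limits. If u is an F-equivalence and g is F-local, then u is orthogonal to g (u ⊥ g). -/
/-!
Applying `F` to a square `a ≫ g = u ≫ b` gives a square whose side `F u` is invertible, so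
any filler `d` must satisfy `F d = (F u)⁻¹ ≫ F a`. Since `g` is the pullback of `F g` along
`η_Y`, a map `B ⟶ X` is determined by its composites with `η_X` and `g`, and the pair
`(η_B ≫ (F u)⁻¹ ≫ F a, b)` is compatible; this gives the filler and its uniqueness.
-/

open CategoryTheory Limits

/-- `f` is orthogonal to `g` (`f ⊥ g`): every commutative square from `f` to `g` admits a
unique diagonal filler. -/
def Orth {E : Type*} [Category E] {A B X Y : E} (f : A ⟶ B) (g : X ⟶ Y) : Prop :=
  ∀ (u : A ⟶ X) (v : B ⟶ Y), u ≫ g = f ≫ v →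
    ∃! d : B ⟶ X, f ≫ d = u ∧ d ≫ g = v

theorem orth_of_isIso_map_of_isPullback_naturality {E : Type*} [Category E] (F : E ⥤ E)
    (η : 𝟭 E ⟶ F) {A B X Y : E} (u : A ⟶ B) (g : X ⟶ Y)
    [IsIso (F.map u)] (hg : IsPullback (η.app X) g (F.map g) (η.app Y)) : Orth u g := by
  intro a b hab
  have hη {P Q : E} (f : P ⟶ Q) : f ≫ η.app Q = η.app P ≫ F.map f := η.naturality f
  have hcone : (η.app B ≫ inv (F.map u) ≫ F.map a) ≫ F.map g = b ≫ η.app Y := by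
    rw [Category.assoc, Category.assoc, ← F.map_comp, hab, F.map_comp,
      IsIso.inv_hom_id_assoc, hη]
  refine ⟨hg.lift _ b hcone, ⟨?_, hg.lift_snd ..⟩, ?_⟩
  · apply hg.hom_ext
    · rw [Category.assoc, hg.lift_fst, reassoc_of% hη u, IsIso.hom_inv_id_assoc]
      exact (hη a).symm
    · rw [Category.assoc, hg.lift_snd, hab]
  · rintro d ⟨hud, hdg⟩
    have hFd : F.map d = inv (F.map u) ≫ F.map a := by
      rw [IsIso.eq_inv_comp, ← F.map_comp, hud]
    apply hg.hom_ext
    · rw [hg.lift_fst, ← hFd]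
      exact hη d
    · rw [hg.lift_snd, hdg]

theorem goodwillie_stmt_2_general {D E : Type*} [Category D] [Category E]
    (L : E ⥤ D) (i : D ⥤ E) (adj : L ⊣ i)
    {A B X Y : E} (u : A ⟶ B) (g : X ⟶ Y)
    (hu : IsIso ((L ⋙ i).map u))
    (hg : IsPullback (adj.unit.app X) g ((L ⋙ i).map g) (adj.unit.app Y)) :
    Orth u g :=
  orth_of_isIso_map_of_isPullback_naturality (L ⋙ i) adj.unit u g hg

/-- For a reflective localization `L ⊣ i` with `F = L ⋙ i` preserving finite
limits, every `F`-equivalence is orthogonal to every `F`-local map. -/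
theorem goodwillie_stmt_2 {D E : Type*} [Category D] [Category E] [HasFiniteLimits E]
    (L : E ⥤ D) (i : D ⥤ E) [i.Full] [i.Faithful] (adj : L ⊣ i)
    [PreservesFiniteLimits (L ⋙ i)]
    {A B X Y : E} (u : A ⟶ B) (g : X ⟶ Y)
    (hu : IsIso ((L ⋙ i).map u))
    (hg : IsPullback (adj.unit.app X) g ((L ⋙ i).map g) (adj.unit.app Y)) :
    Orth u g :=
  goodwillie_stmt_2_general L i adj u g hu hg
end

section
/- Let E be a category with finite limits, i : D ⥤ E a fully faithful functor admitting a left adjoint L, F = L ⋙ i the associated idempotent endofunctor with unit η, and assume F preserves finite limits. If a morphism u of E satisfies u ⊥ g for every F-local morphism g, then u is an F-equivalence. -/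
/-!
Since the unit is invertible on the image of `i`, the naturality square of `η` at `F u` has
invertible horizontal sides, so `F u` is `F`-local. Orthogonality of `u` to `F u` then yields a
diagonal `d : B ⟶ F A` with `u ≫ d = η_A` and `d ≫ F u = η_B`, and the transpose of `d` under
the adjunction is an inverse of `L u`.
-/

open CategoryTheory Limits

namespace CategoryTheory.Adjunction

variable {C D : Type*} [Category C] [Category D] {L : C ⥤ D} {R : D ⥤ C}

lemma isIso_map_of_unit_eq_comp (adj : L ⊣ R) {A B : C} (u : A ⟶ B)
    (d : B ⟶ R.obj (L.obj A)) (hu : u ≫ d = adj.unit.app A)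
    (hd : d ≫ R.map (L.map u) = adj.unit.app B) : IsIso (L.map u) :=
  ⟨(adj.homEquiv _ _).symm d,
    by rw [← homEquiv_naturality_left_symm, hu, ← homEquiv_id, Equiv.symm_apply_apply],
    by rw [← homEquiv_naturality_right_symm, hd, ← homEquiv_id, Equiv.symm_apply_apply]⟩

lemma isPullback_unit_app_obj_map [R.Full] [R.Faithful] (adj : L ⊣ R) {A B : C} (u : A ⟶ B) :
    IsPullback (adj.unit.app (R.obj (L.obj A))) (R.map (L.map u))
      (R.map (L.map (R.map (L.map u)))) (adj.unit.app (R.obj (L.obj B))) :=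
  IsPullback.of_horiz_isIso ⟨(adj.unit.naturality _).symm⟩

end CategoryTheory.Adjunction

theorem goodwillie_stmt_3_general {D E : Type*} [Category D] [Category E]
    (L : E ⥤ D) (i : D ⥤ E) [i.Full] [i.Faithful] (adj : L ⊣ i)
    {A B : E} (u : A ⟶ B)
    (h : ∀ {X Y : E} (g : X ⟶ Y),
      IsPullback (adj.unit.app X) g ((L ⋙ i).map g) (adj.unit.app Y) → Orth u g) :
    IsIso ((L ⋙ i).map u) := by
  obtain ⟨d, ⟨hu, hd⟩, -⟩ := h _ (adj.isPullback_unit_app_obj_map u)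
    (adj.unit.app A) (adj.unit.app B) (adj.unit.naturality u).symm
  have : IsIso (L.map u) := adj.isIso_map_of_unit_eq_comp u d hu hd
  exact i.map_isIso (L.map u)

/-- For a reflective localization `L ⊣ i` with `F = L ⋙ i` preserving finite
limits, a morphism which is orthogonal to every `F`-local map is an `F`-equivalence. -/
theorem goodwillie_stmt_3 {D E : Type*} [Category D] [Category E] [HasFiniteLimits E]
    (L : E ⥤ D) (i : D ⥤ E) [i.Full] [i.Faithful] (adj : L ⊣ i)
    [PreservesFiniteLimits (L ⋙ i)]
    {A B : E} (u : A ⟶ B)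
    (h : ∀ {X Y : E} (g : X ⟶ Y),
      IsPullback (adj.unit.app X) g ((L ⋙ i).map g) (adj.unit.app Y) → Orth u g) :
    IsIso ((L ⋙ i).map u) :=
  goodwillie_stmt_3_general L i adj u h
end

section
/- Let E be a category with finite limits, i : D ⥤ E a fully faithful functor admitting a left adjoint L, F = L ⋙ i the associated idempotent endofunctor with unit η, and assume F preserves finite limits. If a morphism g of E satisfies u ⊥ g for every F-equivalence u, then g is F-local. -/
open CategoryTheory Limits

/-!
Let `k : X ⟶ P` be the comparison map from `X` to the pullback `P` of `F g` and `η_Y`;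
`g` is `F`-local exactly when `k` is an isomorphism. Since `F` preserves pullbacks and inverts
`η_Y`, it inverts the projection `P ⟶ F X`, and hence also `k`, because `k` followed by that
projection is `η_X`. Orthogonality of the `F`-equivalence `k` to `g` then yields a retraction
`d` of `k`. Finally `d ≫ k = 𝟙` is checked on the two projections: on the one to `Y` this is
the filler equation, and on the one to the `F`-local object `F X` it suffices to apply `F`,
which inverts `k`.
-/

namespace CategoryTheory.Adjunction

variable {D E : Type*} [Category D] [Category E] {L : E ⥤ D} {i : D ⥤ E} [i.Full] [i.Faithful]

lemma isIso_map_map_unit_app (adj : L ⊣ i) (Z : E) : IsIso ((L ⋙ i).map (adj.unit.app Z)) :=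
  inferInstanceAs (IsIso (i.map (L.map (adj.unit.app Z))))

lemma hom_ext_of_map_eq (adj : L ⊣ i) {P : E} {c : D} {f₁ f₂ : P ⟶ i.obj c}
    (h : (L ⋙ i).map f₁ = (L ⋙ i).map f₂) : f₁ = f₂ := by
  rw [← cancel_mono (adj.unit.app (i.obj c)), ← adj.unit_naturality f₁, ← adj.unit_naturality f₂]
  exact congrArg _ h

lemma isIso_map_of_comp_fst_eq_unit (adj : L ⊣ i) {X Y P : E} {g : X ⟶ Y}
    {fst : P ⟶ (L ⋙ i).obj X} {snd : P ⟶ Y}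
    (sq : IsPullback fst snd ((L ⋙ i).map g) (adj.unit.app Y))
    [PreservesLimit (cospan ((L ⋙ i).map g) (adj.unit.app Y)) (L ⋙ i)]
    {k : X ⟶ P} (hk : k ≫ fst = adj.unit.app X) : IsIso ((L ⋙ i).map k) := by
  have := adj.isIso_map_map_unit_app
  have : IsIso ((L ⋙ i).map fst) := (sq.map (L ⋙ i)).isIso_fst_of_isIso
  exact IsIso.of_isIso_fac_right (by rw [← Functor.map_comp, hk])

end CategoryTheory.Adjunction

/-- For a reflective localization `L ⊣ i` with `F = L ⋙ i` preserving finite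
limits, a morphism to which every `F`-equivalence is orthogonal is `F`-local. -/
theorem goodwillie_stmt_4 {D E : Type*} [Category D] [Category E] [HasFiniteLimits E]
    (L : E ⥤ D) (i : D ⥤ E) [i.Full] [i.Faithful] (adj : L ⊣ i)
    [PreservesFiniteLimits (L ⋙ i)]
    {X Y : E} (g : X ⟶ Y)
    (h : ∀ {A B : E} (u : A ⟶ B), IsIso ((L ⋙ i).map u) → Orth u g) :
    IsPullback (adj.unit.app X) g ((L ⋙ i).map g) (adj.unit.app Y) := by
  obtain ⟨k, hk₁, hk₂⟩ : ∃ k : X ⟶ pullback ((L ⋙ i).map g) (adj.unit.app Y),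
      k ≫ pullback.fst _ _ = adj.unit.app X ∧ k ≫ pullback.snd _ _ = g :=
    ⟨pullback.lift _ _ (adj.unit.naturality g).symm, pullback.lift_fst .., pullback.lift_snd ..⟩
  have hFk := adj.isIso_map_of_comp_fst_eq_unit
    (IsPullback.of_hasPullback ((L ⋙ i).map g) (adj.unit.app Y)) hk₁
  obtain ⟨d, ⟨hkd, hdg⟩, -⟩ := h k hFk (𝟙 X) (pullback.snd _ _) (by rw [Category.id_comp, hk₂])
  have hFdk : (L ⋙ i).map (d ≫ k) = 𝟙 _ := by
    have hFkd : (L ⋙ i).map k ≫ (L ⋙ i).map d = 𝟙 _ := by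
      rw [← Functor.map_comp, hkd]; exact (L ⋙ i).map_id X
    rw [Functor.map_comp, IsIso.eq_inv_of_hom_inv_id hFkd, IsIso.inv_hom_id]
  have hdk : d ≫ k = 𝟙 _ := by
    apply pullback.hom_ext
    · apply adj.hom_ext_of_map_eq
      rw [Functor.map_comp, hFdk, Category.id_comp, Category.id_comp]
    · rw [Category.assoc, hk₂, hdg, Category.id_comp]
  have : IsIso k := ⟨d, hkd, hdk⟩
  exact IsPullback.of_iso_pullback ⟨(adj.unit.naturality g).symm⟩ (asIso k) hk₁ hk₂
end

section
/- Let E be a category with pullbacks and let (L, R) be an orthogonal factorization system on E: every morphism factors as a morphism in L followed by a morphism in R, L is exactly the class of morphisms orthogonal to every morphism of R, and R is exactly the class of morphisms g such that f ⊥ g for every f ∈ L. Then the following are equivalent: (i) L is stable under base change, i.e. every pullback of a morphism in L along an arbitrary morphism again lies in L; (ii) L is fiberwise orthogonal to R, i.e. for every f : A ⟶ B in L, every g in R, and every morphism Z ⟶ B, the pullback f_Z : A ×_B Z ⟶ Z of f along Z ⟶ B satisfies f_Z ⊥ g. -/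
open CategoryTheory Limits

theorem goodwillie_stmt_5_general {E : Type*} [Category E]
    (L R : MorphismProperty E)
    (hL : ∀ {A B : E} (f : A ⟶ B), L f ↔ ∀ {X Y : E} (g : X ⟶ Y), R g → Orth f g) :
    (∀ {A B Z P : E} (f : A ⟶ B) (z : Z ⟶ B) (p : P ⟶ A) (f' : P ⟶ Z),
        IsPullback p f' f z → L f → L f') ↔
    (∀ {A B X Y : E} (f : A ⟶ B) (g : X ⟶ Y), L f → R g →
      ∀ {Z P : E} (z : Z ⟶ B) (p : P ⟶ A) (fZ : P ⟶ Z),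
        IsPullback p fZ f z → Orth fZ g) := by
  constructor
  · intro stable A B X Y f g hf hg Z P z p fZ hP
    exact (hL fZ).mp (stable f z p fZ hP hf) g hg
  · intro fiberwise A B Z P f z p f' hP hf
    exact (hL f').mpr fun g hg => fiberwise f g hf hg z p f' hP

/-- For an orthogonal factorization system `(L, R)` on a category with
pullbacks, the left class `L` is stable under base change if and only if `L` is fiberwise
orthogonal to `R` (every base change of a map of `L` is orthogonal to every map of `R`);
i.e. `(L, R)` is a modality iff `L ⫫ R`. -/
theorem goodwillie_stmt_5 {E : Type*} [Category E] [HasPullbacks E]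
    (L R : MorphismProperty E)
    (fact : ∀ {A B : E} (f : A ⟶ B),
      ∃ (C : E) (l : A ⟶ C) (r : C ⟶ B), L l ∧ R r ∧ l ≫ r = f)
    (hL : ∀ {A B : E} (f : A ⟶ B), L f ↔ ∀ {X Y : E} (g : X ⟶ Y), R g → Orth f g)
    (hR : ∀ {X Y : E} (g : X ⟶ Y), R g ↔ ∀ {A B : E} (f : A ⟶ B), L f → Orth f g) :
    (∀ {A B Z P : E} (f : A ⟶ B) (z : Z ⟶ B) (p : P ⟶ A) (f' : P ⟶ Z),
        IsPullback p f' f z → L f → L f') ↔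
    (∀ {A B X Y : E} (f : A ⟶ B) (g : X ⟶ Y), L f → R g →
      ∀ {Z P : E} (z : Z ⟶ B) (p : P ⟶ A) (fZ : P ⟶ Z),
        IsPullback p fZ f z → Orth fZ g) :=
  goodwillie_stmt_5_general L R hL
end

section
/- Let E be a category with pullbacks and let f : A ⟶ B and g : X ⟶ Y be morphisms. The following are equivalent: (i) for every morphism Z ⟶ B, the pullback f_Z : A ×_B Z ⟶ Z of f along Z ⟶ B satisfies f_Z ⊥ g; (ii) for every morphism Z ⟶ B and every morphism Z' ⟶ Y, the pullbacks f_Z : A ×_B Z ⟶ Z and g_{Z'} : X ×_Y Z' ⟶ Z' satisfy f_Z ⊥ g_{Z'}. (Either condition defines f being fiberwise orthogonal to g.) -/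
/-! Orthogonality to `g` is inherited by every base change `g_{Z'}` of `g`: a square from `f` to
`g_{Z'}` composes with the pullback square to one from `f` to `g`, whose unique filler lifts
uniquely through the pullback `X ×_Y Z'`. Conversely `g` is its own base change along `𝟙 Y`. -/

open CategoryTheory Limits

theorem Orth.of_isPullback_right {E : Type*} [Category E] {A B X Y Z' Q : E}
    {f : A ⟶ B} {g : X ⟶ Y} (hfg : Orth f g)
    {z' : Z' ⟶ Y} {q : Q ⟶ X} {gZ' : Q ⟶ Z'} (hg : IsPullback q gZ' g z') :
    Orth f gZ' := by
  intro u v huv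
  have hsq : (u ≫ q) ≫ g = f ≫ v ≫ z' := by
    rw [Category.assoc, hg.w, ← Category.assoc, huv, Category.assoc]
  obtain ⟨d, ⟨hfd, hdg⟩, hd_unique⟩ := hfg (u ≫ q) (v ≫ z') hsq
  refine ⟨hg.lift d v hdg, ⟨?_, hg.lift_snd _ _ _⟩, ?_⟩
  · apply hg.hom_ext
    · rw [Category.assoc, hg.lift_fst, hfd]
    · rw [Category.assoc, hg.lift_snd, huv]
  · rintro d' ⟨hfd', hd'g⟩
    have hd'q : d' ≫ q = d := hd_unique (d' ≫ q)
      ⟨by rw [← Category.assoc, hfd'], by rw [Category.assoc, hg.w, ← Category.assoc, hd'g]⟩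
    apply hg.hom_ext
    · rw [hg.lift_fst, hd'q]
    · rw [hg.lift_snd, hd'g]

theorem goodwillie_stmt_6_general {E : Type*} [Category E]
    {A B X Y : E} (f : A ⟶ B) (g : X ⟶ Y) :
    (∀ {Z P : E} (z : Z ⟶ B) (p : P ⟶ A) (fZ : P ⟶ Z),
        IsPullback p fZ f z → Orth fZ g) ↔
    (∀ {Z P : E} (z : Z ⟶ B) (p : P ⟶ A) (fZ : P ⟶ Z), IsPullback p fZ f z →
      ∀ {Z' Q : E} (z' : Z' ⟶ Y) (q : Q ⟶ X) (gZ' : Q ⟶ Z'), IsPullback q gZ' g z' →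
        Orth fZ gZ') :=
  ⟨fun h _ _ z p fZ hf _ _ _ _ _ hg => (h z p fZ hf).of_isPullback_right hg,
    fun h _ _ z p fZ hf => h z p fZ hf (𝟙 Y) (𝟙 X) g (IsPullback.id_horiz g)⟩

/-- In a category with pullbacks, for maps `f : A ⟶ B` and `g : X ⟶ Y`,
the condition that every base change of `f` is orthogonal to `g` is equivalent to the condition
that every base change of `f` is orthogonal to every base change of `g` (fiberwise
orthogonality). -/
theorem goodwillie_stmt_6 {E : Type*} [Category E] [HasPullbacks E]
    {A B X Y : E} (f : A ⟶ B) (g : X ⟶ Y) :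
    (∀ {Z P : E} (z : Z ⟶ B) (p : P ⟶ A) (fZ : P ⟶ Z),
        IsPullback p fZ f z → Orth fZ g) ↔
    (∀ {Z P : E} (z : Z ⟶ B) (p : P ⟶ A) (fZ : P ⟶ Z), IsPullback p fZ f z →
      ∀ {Z' Q : E} (z' : Z' ⟶ Y) (q : Q ⟶ X) (gZ' : Q ⟶ Z'), IsPullback q gZ' g z' →
        Orth fZ gZ') :=
  goodwillie_stmt_6_general f g
end

section
/- Let E be a category with pullbacks and let f : A ⟶ B and g : X ⟶ Y be morphisms. The following are equivalent: (i) for every object Z and every pair of morphisms b : Z ⟶ B and y : Z ⟶ Y, the base changes f_Z : A ×_B Z ⟶ Z and g_Z : X ×_Y Z ⟶ Z, viewed as morphisms of the slice category E/Z with targets the terminal object 𝟙_Z of E/Z, satisfy f_Z ⊥ g_Z in E/Z; (ii) for every morphism Z ⟶ B and every morphism Z' ⟶ Y, the base changes f_Z : A ×_B Z ⟶ Z and g_{Z'} : X ×_Y Z' ⟶ Z' satisfy f_Z ⊥ g_{Z'} in E. -/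
/-! A map from the terminal object `𝟙 Z` of `E/Z` to `g_Z` is a section of `g_Z`, so lifting
`f_Z` against `g_Z` in `E/Z` is lifting in `E` against squares with bottom `𝟙 Z`. Conversely, a
square from `f_Z` to `g_{Z'}` with bottom `v : Z ⟶ Z'` is the same as a square with bottom `𝟙 Z`
against the pullback of `g_{Z'}` along `v`, and by pasting that pullback is again a base change
of `g`, along `v ≫ z'`. -/

open CategoryTheory Limits

namespace Orth

variable {E : Type*} [Category E]

def At {A B X Y : E} (f : A ⟶ B) (g : X ⟶ Y) (v : B ⟶ Y) : Prop :=
  ∀ u : A ⟶ X, u ≫ g = f ≫ v → ∃! d : B ⟶ X, f ≫ d = u ∧ d ≫ g = v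

lemma at_of_orth {A B X Y : E} {f : A ⟶ B} {g : X ⟶ Y} (h : Orth f g) (v : B ⟶ Y) :
    At f g v :=
  fun u huv => h u v huv

lemma over_homMk_iff_at_id {Z P Q : E} (fZ : P ⟶ Z) (gZ : Q ⟶ Z) :
    Orth (E := Over Z)
        (Over.homMk fZ : Over.mk fZ ⟶ Over.mk (𝟙 Z))
        (Over.homMk gZ : Over.mk gZ ⟶ Over.mk (𝟙 Z)) ↔
      At fZ gZ (𝟙 Z) := by
  have endo_eq_id (v : Over.mk (𝟙 Z) ⟶ Over.mk (𝟙 Z)) : v = 𝟙 _ := by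
    ext; simpa using Over.w v
  constructor
  · intro h u hu
    obtain ⟨d, ⟨hd₁, hd₂⟩, hd⟩ :=
      h (Over.homMk u (by simpa using hu)) (𝟙 _) (by ext; simpa using hu)
    refine ⟨d.left, ⟨congrArg CommaMorphism.left hd₁, by simpa using Over.w d⟩, ?_⟩
    rintro d' ⟨hd'₁, hd'₂⟩
    have := hd (Over.homMk d' (by simpa using hd'₂)) ⟨by ext; simpa using hd'₁, endo_eq_id _⟩
    exact congrArg CommaMorphism.left this
  · intro h u v huv
    obtain rfl := endo_eq_id v
    obtain ⟨d, ⟨hd₁, hd₂⟩, hd⟩ := h u.left (by simpa using congrArg CommaMorphism.left huv)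
    refine ⟨Over.homMk d (by simpa using hd₂), ⟨by ext; simpa using hd₁, endo_eq_id _⟩, ?_⟩
    rintro d' ⟨hd'₁, -⟩
    ext
    exact hd d'.left ⟨by simpa using congrArg CommaMorphism.left hd'₁, by simpa using Over.w d'⟩

lemma at_of_at_id_of_isPullback {P Z Q Z' W : E} {f : P ⟶ Z} {g : Q ⟶ Z'} {v : Z ⟶ Z'}
    {k : W ⟶ Q} {gW : W ⟶ Z} (hW : IsPullback k gW g v) (h : At f gW (𝟙 Z)) :
    At f g v := by
  intro u huv
  obtain ⟨s, ⟨hs₁, hs₂⟩, hs⟩ := h (hW.lift u f huv) (by simp)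
  refine ⟨s ≫ k, ⟨by simp [reassoc_of% hs₁], by simp [hW.w, reassoc_of% hs₂]⟩, ?_⟩
  rintro d ⟨hd₁, hd₂⟩
  have hs' : hW.lift d (𝟙 Z) (by simp [hd₂]) = s :=
    hs _ ⟨hW.hom_ext (by simp [hd₁]) (by simp), by simp⟩
  rw [← hs', hW.lift_fst]

end Orth

/-- For maps `f : A ⟶ B` and `g : X ⟶ Y` in a category with pullbacks,
the following are equivalent: (i) for every `Z` with maps `b : Z ⟶ B`, `y : Z ⟶ Y`, the base
changes `f_Z` and `g_Z`, viewed as maps to the terminal object `𝟙 Z` of the slice `E/Z`,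
are orthogonal in `E/Z`; (ii) for every `Z ⟶ B` and `Z' ⟶ Y`, the base changes `f_Z` and
`g_{Z'}` are orthogonal in `E`. -/
theorem goodwillie_stmt_7 {E : Type*} [Category E] [HasPullbacks E]
    {A B X Y : E} (f : A ⟶ B) (g : X ⟶ Y) :
    (∀ {Z P Q : E} (b : Z ⟶ B) (y : Z ⟶ Y)
        (p : P ⟶ A) (fZ : P ⟶ Z) (q : Q ⟶ X) (gZ : Q ⟶ Z),
        IsPullback p fZ f b → IsPullback q gZ g y →
        Orth (E := Over Z)
          (Over.homMk fZ : Over.mk fZ ⟶ Over.mk (𝟙 Z))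
          (Over.homMk gZ : Over.mk gZ ⟶ Over.mk (𝟙 Z))) ↔
    (∀ {Z P : E} (z : Z ⟶ B) (p : P ⟶ A) (fZ : P ⟶ Z), IsPullback p fZ f z →
      ∀ {Z' Q : E} (z' : Z' ⟶ Y) (q : Q ⟶ X) (gZ' : Q ⟶ Z'), IsPullback q gZ' g z' →
        Orth fZ gZ') := by
  constructor
  · intro h Z P z p fZ hP Z' Q z' q gZ' hQ u v
    have hW := IsPullback.of_hasPullback gZ' v
    have horth := h z (v ≫ z') p fZ _ _ hP (hW.paste_horiz hQ)
    exact Orth.at_of_at_id_of_isPullback hW ((Orth.over_homMk_iff_at_id _ _).mp horth) u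
  · intro h Z P Q b y p fZ q gZ hP hQ
    exact (Orth.over_homMk_iff_at_id fZ gZ).mpr (Orth.at_of_orth (h b p fZ hP y q gZ hQ) (𝟙 Z))
end

section
/- Let E be a cartesian closed category with pullbacks, and let f : A ⟶ B and g : X ⟶ Y be morphisms. Let ⟪f, g⟫ : [B, X] ⟶ [A, X] ×_{[A, Y]} [B, Y] denote the internal pullback hom, i.e. the canonical map into the pullback induced by [f, X] : [B, X] ⟶ [A, X] and [B, g] : [B, X] ⟶ [B, Y]. Then ⟪f, g⟫ is an isomorphism if and only if for every object Z of E the morphism 𝟙_Z × f : Z × A ⟶ Z × B satisfies (𝟙_Z × f) ⊥ g. In particular, if ⟪f, g⟫ is an isomorphism then f ⊥ g. -/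
open CategoryTheory Limits MonoidalCategory MonoidalClosed

/-- Orthogonality is invariant under isomorphism of the left morphism. -/
lemma orth_of_iso {E : Type*} [Category E] {A A' B B' X Y : E}
    (eA : A ≅ A') (eB : B ≅ B') (f : A ⟶ B) (f' : A' ⟶ B')
    (hf : f ≫ eB.hom = eA.hom ≫ f') (g : X ⟶ Y) (h : Orth f g) : Orth f' g := by
  intro u v huv
  obtain ⟨d, ⟨hd1, hd2⟩, hd3⟩ := h (eA.hom ≫ u) (eB.hom ≫ v) (by
    rw [Category.assoc, huv, ← Category.assoc, ← hf, Category.assoc])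
  refine ⟨eB.inv ≫ d, ⟨?_, ?_⟩, ?_⟩
  · have : eA.hom ≫ f' ≫ eB.inv ≫ d = eA.hom ≫ u := by
      rw [← Category.assoc, ← hf]
      simp only [Category.assoc, Iso.hom_inv_id_assoc, hd1]
    simpa using congrArg (eA.inv ≫ ·) this
  · rw [Category.assoc, hd2, Iso.inv_hom_id_assoc]
  · intro d' ⟨hd'1, hd'2⟩
    have : eB.hom ≫ d' = d := hd3 _ ⟨by rw [← Category.assoc, hf, Category.assoc, hd'1],
      by rw [Category.assoc, hd'2]⟩
    rw [← this, Iso.inv_hom_id_assoc]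

lemma uncurry_comp_pre_app {E : Type*} [Category E] [MonoidalCategory E]
    {A B X Z : E} [Closed A] [Closed B] (f : A ⟶ B) (h : Z ⟶ (ihom B).obj X) :
    uncurry (h ≫ (MonoidalClosed.pre f).app X) = f ▷ Z ≫ uncurry h := by
  rw [uncurry_eq, uncurry_eq, MonoidalCategory.whiskerLeft_comp, Category.assoc,
    id_tensor_pre_app_comp_ev, ← Category.assoc, whisker_exchange, Category.assoc]

/-- In a cartesian closed category with pullbacks, the internal pullback hom
`⟪f, g⟫ : [B, X] ⟶ [A, X] ×_{[A, Y]} [B, Y]` is an isomorphism if and only if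
`(𝟙 Z × f) ⊥ g` for every object `Z`; in particular, if it is an isomorphism then `f ⊥ g`. -/
theorem goodwillie_stmt_8 {E : Type*} [Category E] [CartesianMonoidalCategory E]
    [MonoidalClosed E] [HasPullbacks E]
    {A B X Y : E} (f : A ⟶ B) (g : X ⟶ Y) :
    letI Φ : (ihom B).obj X ⟶ pullback ((ihom A).map g) ((MonoidalClosed.pre f).app Y) :=
      pullback.lift ((MonoidalClosed.pre f).app X) ((ihom B).map g) ((MonoidalClosed.pre f).naturality g).symm
    (IsIso Φ ↔ ∀ Z : E, Orth (Z ◁ f) g) ∧ (IsIso Φ → Orth f g) := by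
  set Φ := pullback.lift ((MonoidalClosed.pre f).app X) ((ihom B).map g) ((MonoidalClosed.pre f).naturality g).symm with hΦ
  have key : ∀ Z : E,
      Function.Bijective (fun (h : Z ⟶ (ihom B).obj X) => h ≫ Φ) ↔ Orth (f ▷ Z) g := by
    intro Z
    constructor
    · rintro ⟨hinj, hsurj⟩ u v huv
      have w : curry u ≫ (ihom A).map g = curry v ≫ (MonoidalClosed.pre f).app Y := by
        apply uncurry_injective
        rw [uncurry_natural_right, uncurry_curry, uncurry_comp_pre_app, uncurry_curry, huv]
      obtain ⟨h, hh⟩ := hsurj (pullback.lift (curry u) (curry v) w)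
      have h1 : f ▷ Z ≫ uncurry h = u := by
        rw [← uncurry_comp_pre_app]
        have : h ≫ (MonoidalClosed.pre f).app X = curry u := by
          have := congrArg (· ≫ pullback.fst _ _) hh
          simp only [Category.assoc] at this
          rw [pullback.lift_fst, pullback.lift_fst] at this
          simpa [Φ] using this
        rw [this, uncurry_curry]
      have h2 : uncurry h ≫ g = v := by
        rw [← uncurry_natural_right]
        have : h ≫ (ihom B).map g = curry v := by
          have := congrArg (· ≫ pullback.snd _ _) hh
          simp only [Category.assoc] at this
          rw [pullback.lift_snd, pullback.lift_snd] at this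
          simpa [Φ] using this
        rw [this, uncurry_curry]
      refine ⟨uncurry h, ⟨h1, h2⟩, ?_⟩
      intro d' ⟨hd'1, hd'2⟩
      have : curry d' ≫ Φ = pullback.lift (curry u) (curry v) w := by
        apply pullback.hom_ext
        · simp only [Φ, Category.assoc, pullback.lift_fst]
          apply uncurry_injective
          rw [uncurry_comp_pre_app, uncurry_curry, uncurry_curry, hd'1]
        · simp only [Φ, Category.assoc, pullback.lift_snd]
          rw [← curry_natural_right, hd'2]
      have := hinj (this.trans hh.symm)
      rw [← uncurry_curry d', this]
    · intro horth
      constructor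
      · intro h₁ h₂ hh
        simp only at hh
        have e1 : f ▷ Z ≫ uncurry h₁ = f ▷ Z ≫ uncurry h₂ := by
          rw [← uncurry_comp_pre_app, ← uncurry_comp_pre_app]
          congr 1
          have := congrArg (· ≫ pullback.fst _ _) hh
          simp only [Category.assoc] at this
          rw [pullback.lift_fst] at this
          simpa [Φ] using this
        have e2 : uncurry h₁ ≫ g = uncurry h₂ ≫ g := by
          rw [← uncurry_natural_right, ← uncurry_natural_right]
          congr 1
          have := congrArg (· ≫ pullback.snd _ _) hh
          simp only [Category.assoc] at this
          rw [pullback.lift_snd] at this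
          simpa [Φ] using this
        obtain ⟨d, _, hd⟩ := horth (f ▷ Z ≫ uncurry h₁) (uncurry h₁ ≫ g) (Category.assoc _ _ _)
        have hu1 : uncurry h₁ = d := hd _ ⟨rfl, rfl⟩
        have hu2 : uncurry h₂ = d := hd _ ⟨e1.symm, e2.symm⟩
        exact uncurry_injective (hu1.trans hu2.symm)
      · intro k
        have huv : uncurry (k ≫ pullback.fst _ _) ≫ g
            = f ▷ Z ≫ uncurry (k ≫ pullback.snd _ _) := by
          rw [← uncurry_natural_right, ← uncurry_comp_pre_app, Category.assoc, Category.assoc,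
            pullback.condition]
        obtain ⟨d, ⟨hd1, hd2⟩, _⟩ := horth _ _ huv
        refine ⟨curry d, ?_⟩
        apply pullback.hom_ext
        · simp only [Φ, Category.assoc, pullback.lift_fst]
          apply uncurry_injective
          rw [uncurry_comp_pre_app, uncurry_curry, hd1]
        · simp only [Φ, Category.assoc, pullback.lift_snd]
          rw [← curry_natural_right, hd2, curry_uncurry]
  have main : IsIso Φ ↔ ∀ Z : E, Orth (Z ◁ f) g := by
    letI : BraidedCategory E := BraidedCategory.ofCartesianMonoidalCategory
    rw [isIso_iff_yoneda_map_bijective]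
    constructor
    · intro hb Z
      refine orth_of_iso (β_ A Z) (β_ B Z) (f ▷ Z) (Z ◁ f) ?_ g ((key Z).mp (hb Z))
      exact (BraidedCategory.braiding_naturality_left f Z)
    · intro horth Z
      refine (key Z).mpr ?_
      refine orth_of_iso (β_ Z A) (β_ Z B) (Z ◁ f) (f ▷ Z) ?_ g (horth Z)
      exact (BraidedCategory.braiding_naturality_right Z f)
  refine ⟨main, fun hi => ?_⟩
  have := (main.mp hi) (𝟙_ E)
  exact orth_of_iso (λ_ A) (λ_ B) (𝟙_ E ◁ f) f (by simp) g this
end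

section
/- Let E be a category with finite coproducts and let k_i : K_i ⟶ L_i, for i ∈ Fin n, be a family of morphisms. For U ⊆ Fin n set σ_U(i) = L_i if i ∈ U and σ_U(i) = K_i otherwise, and define the n-cube 𝒦 : P(Fin n) ⟶ E by 𝒦(U) = ∐_{i ∈ Fin n} σ_U(i), where for U ⊆ V the map 𝒦(U) ⟶ 𝒦(V) is the coproduct of the maps k_i for i ∈ V \ U and identities otherwise. Then 𝒦 is strongly cocartesian: for every U ⊆ Fin n and every pair of distinct elements i, j ∉ U, the square 𝒦(U) ⟶ 𝒦(U ∪ {i}), 𝒦(U) ⟶ 𝒦(U ∪ {j}), 𝒦(U ∪ {i}) ⟶ 𝒦(U ∪ {i, j}), 𝒦(U ∪ {j}) ⟶ 𝒦(U ∪ {i, j}) is a pushout square. -/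
open CategoryTheory Limits

namespace GoodwillieStmt9

variable {E : Type*} [Category E] [HasFiniteCoproducts E]
variable {n : ℕ} {K L : Fin n → E}

/-- `σ U i` is `L i` if `i ∈ U` and `K i` otherwise. -/
def sigmaObj (K L : Fin n → E) (U : Finset (Fin n)) (i : Fin n) : E :=
  if i ∈ U then L i else K i

/-- The component `σ_U(i) ⟶ σ_V(i)` of the structure maps of the cube `𝒦`:
it is `k i` if `i ∈ V \ U` and an identity otherwise. -/
def cmap (k : ∀ i, K i ⟶ L i) {U V : Finset (Fin n)} (h : U ⊆ V) (i : Fin n) :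
    sigmaObj K L U i ⟶ sigmaObj K L V i :=
  if hU : i ∈ U then eqToHom (by simp [sigmaObj, hU, h hU])
  else if hV : i ∈ V then
    eqToHom (show sigmaObj K L U i = K i by simp [sigmaObj, hU]) ≫ k i ≫
      eqToHom (show L i = sigmaObj K L V i by simp [sigmaObj, hV])
  else eqToHom (by simp [sigmaObj, hU, hV])

/-- The structure map `𝒦(U) ⟶ 𝒦(V)` of the cube `𝒦(U) = ∐ᵢ σ_U(i)`. -/
noncomputable def Kmap (k : ∀ i, K i ⟶ L i) {U V : Finset (Fin n)} (h : U ⊆ V) :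
    (∐ fun i => sigmaObj K L U i) ⟶ (∐ fun i => sigmaObj K L V i) :=
  Limits.Sigma.map (cmap k h)

end GoodwillieStmt9

/-! The cube `𝒦` is the coproduct over `m : Fin n` of the cubes `U ↦ σ_U(m)`, and coproducts
of pushout squares are pushout squares. In the `m`-th summand of the face spanned by `i ≠ j`, the
two edges in the direction of whichever of `i`, `j` differs from `m` are isomorphisms (`eqToHom`s),
and a square with two parallel isomorphisms is a pushout. -/

namespace CategoryTheory.Limits

variable {C : Type*} [Category C] {ι : Type*} {Z X Y P : ι → C}
  [HasCoproduct Z] [HasCoproduct X] [HasCoproduct Y] [HasCoproduct P]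

theorem _root_.CategoryTheory.IsPushout.sigma_map {f : ∀ m, Z m ⟶ X m} {g : ∀ m, Z m ⟶ Y m}
    {inl : ∀ m, X m ⟶ P m} {inr : ∀ m, Y m ⟶ P m}
    (h : ∀ m, IsPushout (f m) (g m) (inl m) (inr m)) :
    IsPushout (Sigma.map f) (Sigma.map g) (Sigma.map inl) (Sigma.map inr) := by
  have comm : Sigma.map f ≫ Sigma.map inl = Sigma.map g ≫ Sigma.map inr := by
    simp only [Sigma.map_comp_map, fun m => (h m).w]
  refine .of_isColimit' ⟨comm⟩ (PushoutCocone.IsColimit.mk _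
    (fun s => Sigma.desc fun m => (h m).desc (Sigma.ι X m ≫ s.inl) (Sigma.ι Y m ≫ s.inr)
      (by simpa using Sigma.ι Z m ≫= s.condition)) ?_ ?_ ?_)
  · intro s; ext m; simp
  · intro s; ext m; simp
  · intro s d hl hr
    ext m
    refine (h m).hom_ext ?_ ?_
    · simpa using Sigma.ι X m ≫= hl
    · simpa using Sigma.ι Y m ≫= hr

end CategoryTheory.Limits

namespace GoodwillieStmt9

lemma sigmaObj_congr {E : Type*} {n : ℕ} {K L : Fin n → E} {U V : Finset (Fin n)} {i : Fin n}
    (h : i ∈ U ↔ i ∈ V) :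
    sigmaObj K L U i = sigmaObj K L V i :=
  if_congr h rfl rfl

section

variable {E : Type*} [Category E] {n : ℕ} {K L : Fin n → E}

lemma cmap_eq_eqToHom (k : ∀ i, K i ⟶ L i) {U V : Finset (Fin n)} (h : U ⊆ V) {i : Fin n}
    (hi : i ∈ V → i ∈ U) :
    cmap k h i = eqToHom (sigmaObj_congr ⟨fun hU => h hU, hi⟩) := by
  unfold cmap
  split_ifs with hU hV
  · rfl
  · exact absurd (hi hV) hU
  · rfl

lemma cmap_of_notMem_of_mem (k : ∀ i, K i ⟶ L i) {U V : Finset (Fin n)} (h : U ⊆ V)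
    {i : Fin n} (hU : i ∉ U) (hV : i ∈ V) :
    cmap k h i = eqToHom (show sigmaObj K L U i = K i by simp [sigmaObj, hU]) ≫ k i ≫
      eqToHom (show L i = sigmaObj K L V i by simp [sigmaObj, hV]) := by
  rw [cmap, dif_neg hU, dif_pos hV]

lemma isIso_cmap (k : ∀ i, K i ⟶ L i) {U V : Finset (Fin n)} (h : U ⊆ V) {i : Fin n}
    (hi : i ∈ V → i ∈ U) : IsIso (cmap k h i) := by
  rw [cmap_eq_eqToHom k h hi]
  infer_instance

lemma cmap_comp (k : ∀ i, K i ⟶ L i) {U V W : Finset (Fin n)} (hUV : U ⊆ V) (hVW : V ⊆ W)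
    (i : Fin n) : cmap k hUV i ≫ cmap k hVW i = cmap k (hUV.trans hVW) i := by
  by_cases hU : i ∈ U
  · rw [cmap_eq_eqToHom k hUV fun _ => hU, cmap_eq_eqToHom k hVW fun _ => hUV hU,
      cmap_eq_eqToHom k (hUV.trans hVW) fun _ => hU, eqToHom_trans]
  by_cases hV : i ∈ V
  · rw [cmap_of_notMem_of_mem k hUV hU hV, cmap_eq_eqToHom k hVW fun _ => hV,
      cmap_of_notMem_of_mem k (hUV.trans hVW) hU (hVW hV)]
    simp
  by_cases hW : i ∈ W
  · rw [cmap_eq_eqToHom k hUV fun hV' => absurd hV' hV, cmap_of_notMem_of_mem k hVW hV hW,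
      cmap_of_notMem_of_mem k (hUV.trans hVW) hU hW]
    simp
  · rw [cmap_eq_eqToHom k hUV fun hV' => absurd hV' hV,
      cmap_eq_eqToHom k hVW fun hW' => absurd hW' hW,
      cmap_eq_eqToHom k (hUV.trans hVW) fun hW' => absurd hW' hW, eqToHom_trans]

end

variable {E : Type*} [Category E] [HasFiniteCoproducts E]
variable {n : ℕ} {K L : Fin n → E}

theorem goodwillie_stmt_9_general (k : ∀ i, K i ⟶ L i) (U : Finset (Fin n)) (i j : Fin n)
    (hij : i ≠ j) :
    IsPushout (Kmap k (Finset.subset_insert i U))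
      (Kmap k (Finset.subset_insert j U))
      (Kmap k (Finset.subset_insert j (insert i U)))
      (Kmap k (Finset.insert_subset_insert j (Finset.subset_insert i U))) := by
  refine IsPushout.sigma_map fun m => ?_
  have sq : CommSq (cmap k (Finset.subset_insert i U) m) (cmap k (Finset.subset_insert j U) m)
      (cmap k (Finset.subset_insert j (insert i U)) m)
      (cmap k (Finset.insert_subset_insert j (Finset.subset_insert i U)) m) :=
    ⟨by rw [cmap_comp, cmap_comp]⟩
  by_cases hm : m = j
  · subst m
    have := isIso_cmap k (Finset.subset_insert i U) (i := j) (by simp [hij.symm])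
    have := isIso_cmap k (Finset.insert_subset_insert j (Finset.subset_insert i U)) (i := j)
      (by simp)
    exact .of_horiz_isIso sq
  · have := isIso_cmap k (Finset.subset_insert j U) (i := m) (by simp [hm])
    have := isIso_cmap k (Finset.subset_insert j (insert i U)) (i := m) (by simp [hm])
    exact .of_vert_isIso sq

/-- For any family of maps `k i : K i ⟶ L i` (`i : Fin n`), the `n`-cube
`𝒦(U) = ∐ᵢ σ_U(i)` (where `σ_U(i) = L i` if `i ∈ U`, `K i` otherwise), with structure maps the
coproducts of the `k i` on coordinates added and identities elsewhere, is strongly cocartesian: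
each 2-dimensional face obtained by adding two distinct fresh elements `i, j` to `U` is a
pushout square. -/
theorem goodwillie_stmt_9 (k : ∀ i, K i ⟶ L i) (U : Finset (Fin n)) (i j : Fin n)
    (hij : i ≠ j) (hi : i ∉ U) (hj : j ∉ U) :
    IsPushout (Kmap k (Finset.subset_insert i U))
      (Kmap k (Finset.subset_insert j U))
      (Kmap k (Finset.subset_insert j (insert i U)))
      (Kmap k (Finset.insert_subset_insert j (Finset.subset_insert i U))) :=
  goodwillie_stmt_9_general k U i j hij

end GoodwillieStmt9
end

section
/- Let E be a category with finite colimits and let X : P(Fin n) ⟶ E be a strongly cocartesian n-cube. Write K = X(∅) and k_i = X(∅ ⊆ {i}) : K ⟶ X({i}). Then for every U ⊆ Fin n, the following square is a pushout: top-left corner ∐_{i ∈ Fin n} K; top map the codiagonal ∇ : ∐_{i ∈ Fin n} K ⟶ K; left map the coproduct over i ∈ Fin n of the maps (k_i if i ∈ U, identity of K otherwise) into ∐_{i ∈ Fin n} σ_U(i) (where σ_U(i) = X({i}) if i ∈ U and σ_U(i) = K otherwise); right map X(∅ ⊆ U) : K ⟶ X(U); bottom map ∐_{i ∈ Fin n}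 σ_U(i) ⟶ X(U) whose i-th component is X({i} ⊆ U) : X({i}) ⟶ X(U) if i ∈ U and X(∅ ⊆ U) : K ⟶ X(U) otherwise. -/
/-! Induct on `U`. Adding `j ∉ V` changes the left leg only in the `j`-th summand, where `𝟙 K`
becomes `k_j`; so the square for `V ∪ {j}` is the square for `V` pasted with a square whose left
leg is invertible away from the `j`-th summand. Such a square is a pushout as soon as its `j`-th
summand is, and that summand is the square `X(∅) → X({j}), X(∅) → X(V)` over `X(V ∪ {j})`,
a pushout because `X` is strongly cocartesian. -/

open CategoryTheory Limits

namespace GoodwillieStmt10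

variable {E : Type*} [Category E] [HasFiniteColimits E] {n : ℕ}

/-- `σ_U(i)` is `X({i})` if `i ∈ U` and `K = X(∅)` otherwise. -/
def sigmaObj (X : Finset (Fin n) ⥤ E) (U : Finset (Fin n)) (i : Fin n) : E :=
  if i ∈ U then X.obj {i} else X.obj ∅

/-- The `i`-th component `K ⟶ σ_U(i)` of the left map: `k_i = X(∅ ⊆ {i})` if `i ∈ U`,
identity of `K` otherwise. -/
def lmap (X : Finset (Fin n) ⥤ E) (U : Finset (Fin n)) (i : Fin n) :
    X.obj ∅ ⟶ sigmaObj X U i :=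
  if h : i ∈ U then
    X.map (homOfLE (Finset.empty_subset {i})) ≫
      eqToHom (show X.obj {i} = sigmaObj X U i by simp [sigmaObj, h])
  else eqToHom (by simp [sigmaObj, h])

/-- The `i`-th component `σ_U(i) ⟶ X(U)` of the bottom map: `X({i} ⊆ U)` if `i ∈ U`,
`X(∅ ⊆ U)` otherwise. -/
def bmap (X : Finset (Fin n) ⥤ E) (U : Finset (Fin n)) (i : Fin n) :
    sigmaObj X U i ⟶ X.obj U :=
  if h : i ∈ U then
    eqToHom (show sigmaObj X U i = X.obj {i} by simp [sigmaObj, h]) ≫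
      X.map (homOfLE (Finset.singleton_subset_iff.mpr h))
  else
    eqToHom (show sigmaObj X U i = X.obj ∅ by simp [sigmaObj, h]) ≫
      X.map (homOfLE (Finset.empty_subset U))

section
variable {C : Type*} [Category C]

def IsStronglyCocartesian {α : Type*} [DecidableEq α] (X : Finset α ⥤ C) : Prop :=
  ∀ (U : Finset α) (i j : α), i ≠ j → i ∉ U → j ∉ U →
    IsPushout (X.map (homOfLE (Finset.subset_insert i U)))
      (X.map (homOfLE (Finset.subset_insert j U)))
      (X.map (homOfLE (Finset.subset_insert j (insert i U))))
      (X.map (homOfLE (Finset.insert_subset_insert j (Finset.subset_insert i U))))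

/-- Paste the defining squares along the elements of `V`. The corner `B` is kept apart from
`insert j V` because pasting builds it as `insert i (insert j W)`. -/
theorem IsStronglyCocartesian.isPushout_singleton_insert {α : Type*} [DecidableEq α]
    {X : Finset α ⥤ C} (hX : IsStronglyCocartesian X) {j : α} {V B : Finset α} (hj : j ∉ V)
    (hB : B = insert j V) (f : ∅ ⟶ {j}) (g : ∅ ⟶ V) (h : {j} ⟶ B) (k : V ⟶ B) :
    IsPushout (X.map f) (X.map g) (X.map h) (X.map k) := by
  induction V using Finset.induction_on generalizing B with
  | empty =>
    obtain rfl : B = {j} := hB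
    obtain rfl : g = 𝟙 _ := Subsingleton.elim _ _
    obtain rfl : h = 𝟙 _ := Subsingleton.elim _ _
    exact IsPushout.of_vert_isIso (X.map_commSq ⟨Subsingleton.elim _ _⟩)
  | @insert i W hiW ih =>
    have hji : j ≠ i := fun hji => hj (hji ▸ Finset.mem_insert_self i W)
    have hjW : j ∉ W := fun h => hj (Finset.mem_insert_of_mem h)
    obtain rfl : B = insert i (insert j W) := hB.trans (Finset.insert_comm j i W)
    have hpaste := (ih hjW rfl (homOfLE (Finset.empty_subset W))
      (homOfLE (by simp)) (homOfLE (Finset.subset_insert j W))).paste_vert (hX W j i hji hjW hiW)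
    simp only [← X.map_comp] at hpaste
    convert hpaste using 2 <;> exact Subsingleton.elim _ _

theorem isPushout_sigma_map_of_isPushout_ι {ι : Type*} {A B : ι → C} [HasCoproduct A]
    [HasCoproduct B] {P Q : C} {t : ∐ A ⟶ P} {g : ∀ i, A i ⟶ B i} {r : P ⟶ Q} {b : ∐ B ⟶ Q}
    (j : ι) (hg : ∀ i, i ≠ j → IsIso (g i)) (w : t ≫ r = Limits.Sigma.map g ≫ b)
    (hj : IsPushout (Sigma.ι A j ≫ t) (g j) r (Sigma.ι B j ≫ b)) :
    IsPushout t (Limits.Sigma.map g) r b := by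
  have hcond (s : PushoutCocone t (Limits.Sigma.map g)) (i : ι) :
      Sigma.ι A i ≫ t ≫ s.inl = g i ≫ Sigma.ι B i ≫ s.inr := by
    simpa using Sigma.ι A i ≫= s.condition
  refine IsPushout.of_isColimit' ⟨w⟩ (PushoutCocone.IsColimit.mk w
    (fun s => hj.desc s.inl (Sigma.ι B j ≫ s.inr) (by simpa using hcond s j))
    (fun s => hj.inl_desc ..) (fun s => ?_) (fun s m hr hb => hj.hom_ext ?_ ?_))
  · ext i
    obtain rfl | hij := eq_or_ne i j
    · simpa using hj.inr_desc ..
    · have := hg i hij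
      rw [← cancel_epi (g i), ← Sigma.ι_map_assoc, ← reassoc_of% w, hj.inl_desc, ← hcond]
  · simpa using hr
  · simpa using Sigma.ι B j ≫= hb

/-- `σ_V(i) ⟶ σ_{V ∪ {j}}(i)`: `k_j` at `i = j ∉ V`, an identity up to `eqToHom` elsewhere. -/
def sigmaObjInsertMap (X : Finset (Fin n) ⥤ C) (V : Finset (Fin n)) (j i : Fin n) :
    sigmaObj X V i ⟶ sigmaObj X (insert j V) i :=
  if h : i = j ∧ j ∉ V then
    eqToHom (show sigmaObj X V i = X.obj ∅ by simp [sigmaObj, h.1, h.2]) ≫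
      X.map (homOfLE (Finset.empty_subset {i})) ≫
      eqToHom (show X.obj {i} = sigmaObj X (insert j V) i by simp [sigmaObj, h.1])
  else
    eqToHom (show sigmaObj X V i = sigmaObj X (insert j V) i by
      unfold sigmaObj
      obtain rfl | hij := eq_or_ne i j
      · simp [show i ∈ V by tauto]
      · simp [hij])

variable (X : Finset (Fin n) ⥤ C) {V : Finset (Fin n)} {j : Fin n}

theorem lmap_insert (hj : j ∉ V) (i : Fin n) :
    lmap X (insert j V) i = lmap X V i ≫ sigmaObjInsertMap X V j i := by
  obtain rfl | hij := eq_or_ne i j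
  · simp [lmap, sigmaObjInsertMap, hj]
  · by_cases hi : i ∈ V <;> simp [lmap, sigmaObjInsertMap, hij, hi]

theorem sigmaObjInsertMap_bmap (hj : j ∉ V) (i : Fin n) :
    sigmaObjInsertMap X V j i ≫ bmap X (insert j V) i =
      bmap X V i ≫ X.map (homOfLE (Finset.subset_insert j V)) := by
  obtain rfl | hij := eq_or_ne i j
  · simp [sigmaObjInsertMap, bmap, hj, ← X.map_comp]
  · by_cases hi : i ∈ V <;> simp [sigmaObjInsertMap, bmap, hij, hi, ← X.map_comp]

theorem isPushout_sigmaObjInsertMap [HasFiniteCoproducts C] (hX : IsStronglyCocartesian X)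
    (hj : j ∉ V) :
    IsPushout (Sigma.desc (bmap X V)) (Limits.Sigma.map (sigmaObjInsertMap X V j))
      (X.map (homOfLE (Finset.subset_insert j V))) (Sigma.desc (bmap X (insert j V))) := by
  refine isPushout_sigma_map_of_isPushout_ι j (fun i hij => ?_) ?_ ?_
  · simp only [sigmaObjInsertMap, dif_neg (fun h : i = j ∧ j ∉ V => hij h.1)]
    infer_instance
  · ext i
    simp [sigmaObjInsertMap_bmap X hj]
  · simp only [colimit.ι_desc, Cofan.mk_ι_app]
    refine (hX.isPushout_singleton_insert hj rfl (homOfLE (Finset.empty_subset _))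
      (homOfLE (Finset.empty_subset _)) (homOfLE (by simp)) (homOfLE (Finset.subset_insert j V))
      ).flip.of_iso (eqToIso (by simp [sigmaObj, hj])) (Iso.refl _)
        (eqToIso (by simp [sigmaObj])) (Iso.refl _) ?_ ?_ ?_ ?_ <;>
      simp [bmap, sigmaObjInsertMap, hj]

end

/-- Let `X` be a strongly cocartesian `n`-cube in a category with finite
colimits, with `K = X(∅)` and `k_i = X(∅ ⊆ {i})`. Then for every `U ⊆ Fin n` the square whose
top is the codiagonal `∐ᵢ K ⟶ K`, whose left leg is the coproduct of the maps
(`k_i` if `i ∈ U`, identity otherwise) into `∐ᵢ σ_U(i)`, whose right leg is `X(∅ ⊆ U)`, and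
whose bottom leg has components `X({i} ⊆ U)` (for `i ∈ U`) resp. `X(∅ ⊆ U)` (otherwise),
is a pushout. -/
theorem goodwillie_stmt_10 (X : Finset (Fin n) ⥤ E)
    (hX : ∀ (U : Finset (Fin n)) (i j : Fin n), i ≠ j → i ∉ U → j ∉ U →
      IsPushout (X.map (homOfLE (Finset.subset_insert i U)))
        (X.map (homOfLE (Finset.subset_insert j U)))
        (X.map (homOfLE (Finset.subset_insert j (insert i U))))
        (X.map (homOfLE (Finset.insert_subset_insert j (Finset.subset_insert i U)))))
    (U : Finset (Fin n)) :
    IsPushout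
      (Sigma.desc fun _ : Fin n => 𝟙 (X.obj ∅))
      (Limits.Sigma.map (lmap X U))
      (X.map (homOfLE (Finset.empty_subset U)))
      (Sigma.desc (bmap X U)) := by
  induction U using Finset.induction_on with
  | empty =>
    have (i : Fin n) : IsIso (lmap X ∅ i) := by
      simp only [lmap, dif_neg (Finset.notMem_empty i)]
      infer_instance
    rw [Subsingleton.elim (homOfLE _) (𝟙 ∅), X.map_id]
    refine IsPushout.of_vert_isIso ⟨?_⟩
    ext i
    simp [lmap, bmap]
  | @insert j V hj ih =>
    have hleft : Limits.Sigma.map (lmap X (insert j V)) =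
        Limits.Sigma.map (lmap X V) ≫ Limits.Sigma.map (sigmaObjInsertMap X V j) := by
      simp only [Sigma.map_comp_map, ← lmap_insert X hj]
    have hright : X.map (homOfLE (Finset.empty_subset (insert j V))) =
        X.map (homOfLE (Finset.empty_subset V)) ≫ X.map (homOfLE (Finset.subset_insert j V)) := by
      rw [← X.map_comp]
      rfl
    rw [hleft, hright]
    exact ih.paste_vert (isPushout_sigmaObjInsertMap X hX hj)

end GoodwillieStmt10
end

section
/- Let X : P(Fin m) ⟶ E and Y : P(Fin n) ⟶ E be strongly cocartesian cubes in a category E with finite coproducts and pushouts. Then the external coproduct X ⊞ Y : P(Fin m) × P(Fin n) ⟶ E defined by (X ⊞ Y)(A, B) = X(A) ⊔ Y(B) is strongly cocartesian: every square of X ⊞ Y obtained from two distinct elementary inclusions (adding a single element to A or to B) is a pushout square. Explicitly, for all A ⊆ Fin m, B ⊆ Fin n: (a) for distinct i, j ∉ A, the square on (A,B), (A∪{i},B), (A∪{j},B), (A∪{i,j},B) is a pushout; (b) for distinct i, j ∉ B, the square on (A,B), (A,B∪{i}), (A,B∪{j}), (A,B∪{i,j}) is a pushout; (c) for i ∉ A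 and j ∉ B, the square on (A,B), (A∪{i},B), (A,B∪{j}), (A∪{i},B∪{j}) is a pushout. -/
/-! Coproducts commute with pushouts, and each face of `X ⊞ Y` is the coproduct of a face of
`X` or `Y` with a square having two parallel identity sides, which is trivially a pushout. -/

open CategoryTheory Limits

/-- A cube (functor on the poset of finite subsets of `Fin n`) is strongly cocartesian if each
2-dimensional face obtained by adding two distinct fresh elements is a pushout square. -/
def StronglyCocartesian {E : Type*} [Category E] {n : ℕ} (X : Finset (Fin n) ⥤ E) : Prop :=
  ∀ (U : Finset (Fin n)) (i j : Fin n), i ≠ j → i ∉ U → j ∉ U →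
    IsPushout (X.map (homOfLE (Finset.subset_insert i U)))
      (X.map (homOfLE (Finset.subset_insert j U)))
      (X.map (homOfLE (Finset.subset_insert j (insert i U))))
      (X.map (homOfLE (Finset.insert_subset_insert j (Finset.subset_insert i U))))

namespace CategoryTheory.IsPushout

variable {C : Type*} [Category C] [HasBinaryCoproducts C]

theorem coprod_map {Z X Y P Z' X' Y' P' : C}
    {f : Z ⟶ X} {g : Z ⟶ Y} {inl : X ⟶ P} {inr : Y ⟶ P}
    {f' : Z' ⟶ X'} {g' : Z' ⟶ Y'} {inl' : X' ⟶ P'} {inr' : Y' ⟶ P'}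
    (h : IsPushout f g inl inr) (h' : IsPushout f' g' inl' inr') :
    IsPushout (coprod.map f f') (coprod.map g g') (coprod.map inl inl')
      (coprod.map inr inr') := by
  have w : coprod.map f f' ≫ coprod.map inl inl' = coprod.map g g' ≫ coprod.map inr inr' := by
    rw [coprod.map_map, coprod.map_map, h.w, h'.w]
  refine IsPushout.of_isColimit' ⟨w⟩ <| PushoutCocone.IsColimit.mk _
    (fun s => coprod.desc
      (h.desc (coprod.inl ≫ s.inl) (coprod.inl ≫ s.inr)
        (by simpa using coprod.inl ≫= s.condition))
      (h'.desc (coprod.inr ≫ s.inl) (coprod.inr ≫ s.inr)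
        (by simpa using coprod.inr ≫= s.condition)))
    (fun s => by ext <;> simp [coprod.inl_desc, coprod.inr_desc])
    (fun s => by ext <;> simp [coprod.inl_desc, coprod.inr_desc]) (fun s m hl hr => ?_)
  ext
  · refine h.hom_ext ?_ ?_ <;> simp [coprod.inl_desc, ← hl, ← hr]
  · refine h'.hom_ext ?_ ?_ <;> simp [coprod.inr_desc, ← hl, ← hr]

end CategoryTheory.IsPushout

/-- The external coproduct `(X ⊞ Y)(A, B) = X(A) ⊔ Y(B)` of strongly
cocartesian cubes `X`, `Y` is strongly cocartesian: every 2-dimensional face of `X ⊞ Y`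
obtained from two distinct elementary inclusions — (a) both in the `X` direction, (b) both in
the `Y` direction, (c) one in each direction — is a pushout square. -/
theorem goodwillie_stmt_11 {E : Type*} [Category E] [HasBinaryCoproducts E] {m n : ℕ}
    (X : Finset (Fin m) ⥤ E) (Y : Finset (Fin n) ⥤ E)
    (hX : StronglyCocartesian X) (hY : StronglyCocartesian Y) :
    (∀ (A : Finset (Fin m)) (B : Finset (Fin n)) (i j : Fin m), i ≠ j → i ∉ A → j ∉ A →
      IsPushout
        (coprod.map (X.map (homOfLE (Finset.subset_insert i A))) (𝟙 (Y.obj B)))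
        (coprod.map (X.map (homOfLE (Finset.subset_insert j A))) (𝟙 (Y.obj B)))
        (coprod.map (X.map (homOfLE (Finset.subset_insert j (insert i A)))) (𝟙 (Y.obj B)))
        (coprod.map (X.map (homOfLE (Finset.insert_subset_insert j (Finset.subset_insert i A))))
          (𝟙 (Y.obj B)))) ∧
    (∀ (A : Finset (Fin m)) (B : Finset (Fin n)) (i j : Fin n), i ≠ j → i ∉ B → j ∉ B →
      IsPushout
        (coprod.map (𝟙 (X.obj A)) (Y.map (homOfLE (Finset.subset_insert i B))))
        (coprod.map (𝟙 (X.obj A)) (Y.map (homOfLE (Finset.subset_insert j B))))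
        (coprod.map (𝟙 (X.obj A)) (Y.map (homOfLE (Finset.subset_insert j (insert i B)))))
        (coprod.map (𝟙 (X.obj A))
          (Y.map (homOfLE (Finset.insert_subset_insert j (Finset.subset_insert i B)))))) ∧
    (∀ (A : Finset (Fin m)) (B : Finset (Fin n)) (i : Fin m) (j : Fin n), i ∉ A → j ∉ B →
      IsPushout
        (coprod.map (X.map (homOfLE (Finset.subset_insert i A))) (𝟙 (Y.obj B)))
        (coprod.map (𝟙 (X.obj A)) (Y.map (homOfLE (Finset.subset_insert j B))))
        (coprod.map (𝟙 (X.obj (insert i A))) (Y.map (homOfLE (Finset.subset_insert j B))))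
        (coprod.map (X.map (homOfLE (Finset.subset_insert i A))) (𝟙 (Y.obj (insert j B))))) :=
  ⟨fun A _ i j hij hi hj => (hX A i j hij hi hj).coprod_map (.id_horiz _),
    fun _ B i j hij hi hj => (IsPushout.id_horiz _).coprod_map (hY B i j hij hi hj),
    fun _ _ _ _ _ _ => (IsPushout.id_vert _).coprod_map (.id_horiz _)⟩
end

section
/- Let C be a small category, X : P(Fin n) ⟶ C an n-cube in C, and F : C ⥤ Type a functor. Let y(c) = C(c, −) denote the corepresentable functor on an object c, so that applying y to X yields a contravariant cube of objects of the functor category [C, Type], and let γ : colim_{∅ ≠ U ⊆ Fin n} y(X(U)) ⟶ y(X(∅)) be its cocartesian gap map (the colimit is taken over the opposite of the poset of nonempty subsets of Fin n, with transition maps y applied to the structure maps of X). Then γ is orthogonal to the unique map F ⟶ ⊤ to the terminal object of [C, Type] if and only if the cube F ∘ X is cartesian, i.e. the canonical map F(X(∅)) ⟶ lim_{∅ ≠ U ⊆ Fin n} F(X(U)) is an isomorphism. -/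
open CategoryTheory Limits Opposite

namespace GoodwillieStmt12

variable {C : Type} [SmallCategory C] {n : ℕ}

/-- The poset of nonempty subsets of `Fin n`. -/
abbrev D (n : ℕ) := {U : Finset (Fin n) // U.Nonempty}

/-- The inclusion of the poset of nonempty subsets into all subsets. -/
def incl (n : ℕ) : D n ⥤ Finset (Fin n) :=
  Monotone.functor (f := (Subtype.val : D n → Finset (Fin n))) fun _ _ h => h

/-- The contravariant cube of corepresentable functors `U ↦ y(X(U))`, restricted to the
nonempty subsets. -/
def diag (X : Finset (Fin n) ⥤ C) : (D n)ᵒᵖ ⥤ (C ⥤ Type) :=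
  (incl n).op ⋙ X.op ⋙ coyoneda

/-- The cocone on the cube of corepresentables with vertex `y(X(∅))`, whose legs are induced
by the maps `X(∅ ⊆ U)`. -/
def gapCocone (X : Finset (Fin n) ⥤ C) : Cocone (diag X) where
  pt := coyoneda.obj (op (X.obj ∅))
  ι :=
    { app := fun U => coyoneda.map ((X.map (homOfLE (Finset.empty_subset U.unop.val))).op)
      naturality := fun U V h => by
        dsimp [diag]
        erw [Category.comp_id, ← Functor.map_comp, ← op_comp, ← Functor.map_comp]
        congr 2 }

/-- The cocartesian gap map `γ : colim_{∅ ≠ U} y(X(U)) ⟶ y(X(∅))` of the cube of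
corepresentables. -/
noncomputable def gap (X : Finset (Fin n) ⥤ C) :
    colimit (diag X) ⟶ coyoneda.obj (op (X.obj ∅)) :=
  colimit.desc _ (gapCocone X)

/-- The cone on the cube `U ↦ F(X(U))` (over the nonempty subsets) with vertex `F(X(∅))`. -/
def cubeCone (X : Finset (Fin n) ⥤ C) (F : C ⥤ Type) : Cone (incl n ⋙ X ⋙ F) where
  pt := F.obj (X.obj ∅)
  π :=
    { app := fun U => F.map (X.map (homOfLE (Finset.empty_subset U.val)))
      naturality := fun U V h => by
        dsimp [incl]
        rw [Category.id_comp, ← Functor.map_comp, ← Functor.map_comp]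
        congr 2 }

/-- Orthogonality against the map to a terminal object simplifies to a unique lifting
property. -/
lemma orth_terminal_iff {E : Type*} [Category E] [HasTerminal E] {A B T : E} (f : A ⟶ B) :
    Orth f (terminal.from T) ↔ ∀ u : A ⟶ T, ∃! d : B ⟶ T, f ≫ d = u := by
  constructor
  · intro h u
    obtain ⟨d, ⟨hd, _⟩, hun⟩ := h u (terminal.from B) (terminal.hom_ext _ _)
    exact ⟨d, hd, fun d' hd' => hun d' ⟨hd', terminal.hom_ext _ _⟩⟩
  · intro h u v _
    obtain ⟨d, hd, hun⟩ := h u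
    exact ⟨d, ⟨hd, terminal.hom_ext _ _⟩, fun d' hd' => hun d' hd'.1⟩

/-- The compatible family underlying `e₂`. -/
noncomputable def fam (X : Finset (Fin n) ⥤ C) (F : C ⥤ Type) (u : colimit (diag X) ⟶ F) (U : D n) :
    F.obj (X.obj U.val) :=
  coyonedaEquiv (colimit.ι (diag X) (op U) ≫ u)

lemma fam_compat (X : Finset (Fin n) ⥤ C) (F : C ⥤ Type) (u : colimit (diag X) ⟶ F)
    (U V : D n) (h : U ⟶ V) :
    F.map (X.map ((incl n).map h)) (fam X F u U) = fam X F u V := by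
  unfold fam
  exact (coyonedaEquiv_naturality _ _).trans
    (by erw [← Category.assoc]
        exact congrArg coyonedaEquiv (congrArg (· ≫ u) (colimit.w (diag X) h.op)))

/-- Maps out of the colimit of the cube of corepresentables into `F` correspond to elements
of the limit of `F ∘ X` over the nonempty subsets. -/
noncomputable def e₂ (X : Finset (Fin n) ⥤ C) (F : C ⥤ Type) :
    (colimit (diag X) ⟶ F) → limit (incl n ⋙ X ⋙ F) := fun u =>
  Types.Limit.mk (incl n ⋙ X ⋙ F) (fam X F u) (fam_compat X F u)

lemma π_e₂ (X : Finset (Fin n) ⥤ C) (F : C ⥤ Type) (u : colimit (diag X) ⟶ F) (U : D n) :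
    limit.π (incl n ⋙ X ⋙ F) U (e₂ X F u) = coyonedaEquiv (colimit.ι (diag X) (op U) ≫ u) :=
  Types.Limit.π_mk (incl n ⋙ X ⋙ F) (fam X F u) (fam_compat X F u) U

lemma e₂_injective (X : Finset (Fin n) ⥤ C) (F : C ⥤ Type) :
    Function.Injective (e₂ X F) := by
  intro u u' h
  refine colimit.hom_ext (fun U => ?_)
  have := congrArg (limit.π (incl n ⋙ X ⋙ F) U.unop) h
  rw [π_e₂, π_e₂] at this
  exact coyonedaEquiv.injective this

/-- The cocone on `diag X` determined by an element of the limit. -/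
noncomputable def coc (X : Finset (Fin n) ⥤ C) (F : C ⥤ Type)
    (x : limit (incl n ⋙ X ⋙ F)) (U : (D n)ᵒᵖ) :
    coyoneda.obj (op (X.obj U.unop.val)) ⟶ F :=
  coyonedaEquiv.symm (limit.π (incl n ⋙ X ⋙ F) U.unop x)

lemma coc_w (X : Finset (Fin n) ⥤ C) (F : C ⥤ Type) (x : limit (incl n ⋙ X ⋙ F))
    (U V : (D n)ᵒᵖ) (h : U ⟶ V) :
    (diag X).map h ≫ coc X F x V = coc X F x U := by
  have hw : F.map (X.map ((incl n).map h.unop))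
      (limit.π (incl n ⋙ X ⋙ F) V.unop x) = limit.π (incl n ⋙ X ⋙ F) U.unop x :=
    limit.w_apply (incl n ⋙ X ⋙ F) h.unop x
  unfold coc
  erw [← hw, coyonedaEquiv_symm_map]
  rfl

lemma e₂_surjective (X : Finset (Fin n) ⥤ C) (F : C ⥤ Type) :
    Function.Surjective (e₂ X F) := by
  intro x
  let c : Cocone (diag X) :=
    { pt := F
      ι :=
        { app := coc X F x
          naturality := fun U V h =>
            (coc_w X F x U V h).trans (Category.comp_id _).symm } }
  refine ⟨colimit.desc (diag X) c, Types.limit_ext _ _ _ (fun U => ?_)⟩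
  erw [π_e₂, colimit.ι_desc]
  exact coyonedaEquiv.apply_symm_apply _

lemma e₂_gap_comp (X : Finset (Fin n) ⥤ C) (F : C ⥤ Type)
    (d : coyoneda.obj (op (X.obj ∅)) ⟶ F) :
    e₂ X F (gap X ≫ d) = limit.lift (incl n ⋙ X ⋙ F) (cubeCone X F) (coyonedaEquiv d) := by
  refine Types.limit_ext _ _ _ (fun U => ?_)
  erw [π_e₂, ← Category.assoc]
  have h1 : colimit.ι (diag X) (op U) ≫ gap X
      = coyoneda.map ((X.map (homOfLE (Finset.empty_subset U.val))).op) :=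
    colimit.ι_desc (gapCocone X) (op U)
  erw [h1, ← coyonedaEquiv_naturality]
  exact (limit.lift_π_apply (cubeCone X F) U (coyonedaEquiv d : F.obj (X.obj ∅))).symm

/-- For an `n`-cube `X` in a small category `C` and a functor
`F : C ⥤ Type`, the cocartesian gap map `γ` of the cube of corepresentables `y ∘ X` is
orthogonal to the map `F ⟶ ⊤` if and only if the cube `F ∘ X` is cartesian, i.e. the
canonical map `F(X(∅)) ⟶ lim_{∅ ≠ U} F(X(U))` is an isomorphism. -/
theorem goodwillie_stmt_12 (X : Finset (Fin n) ⥤ C) (F : C ⥤ Type) :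
    Orth (gap X) (terminal.from F) ↔
      IsIso (limit.lift (incl n ⋙ X ⋙ F) (cubeCone X F)) := by
  rw [orth_terminal_iff, isIso_iff_bijective, Function.bijective_iff_existsUnique]
  constructor
  · intro h x
    obtain ⟨u, hu⟩ := e₂_surjective X F x
    obtain ⟨d, hd, hun⟩ := h u
    refine ⟨coyonedaEquiv d, ?_, fun a' ha' => ?_⟩
    · show limit.lift (incl n ⋙ X ⋙ F) (cubeCone X F) (coyonedaEquiv d) = x
      rw [← e₂_gap_comp, hd, hu]
    have : e₂ X F (gap X ≫ coyonedaEquiv.symm a') = e₂ X F u := by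
      erw [e₂_gap_comp, coyonedaEquiv.apply_symm_apply, ha', hu]
    have := hun _ (e₂_injective X F this)
    erw [← this, coyonedaEquiv.apply_symm_apply]
  · intro h u
    obtain ⟨a, ha, hun⟩ := h (e₂ X F u)
    refine ⟨coyonedaEquiv.symm a, ?_, fun d' hd' => ?_⟩
    · refine e₂_injective X F ?_
      erw [e₂_gap_comp, coyonedaEquiv.apply_symm_apply]
      exact ha
    · have hd2 : gap X ≫ d' = u := hd'
      have : coyonedaEquiv d' = a := hun _ (by
        show limit.lift (incl n ⋙ X ⋙ F) (cubeCone X F) (coyonedaEquiv d') = e₂ X F u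
        rw [← e₂_gap_comp, hd2])
      rw [← this, coyonedaEquiv.symm_apply_apply]

end GoodwillieStmt12
end

section
/- Let C be a category with finite colimits and a terminal object ⊤, and let F : C ⥤ Type be a functor which sends every pushout square of C to a pullback square of types (i.e. F is 1-excisive and takes values in discrete objects). Then for every object K of C, the map F(K) ⟶ F(⊤) induced by the unique morphism K ⟶ ⊤ is a bijection; consequently F is isomorphic to the constant functor with value F(⊤). -/
/-!
A functor `F` sending pushouts to pullbacks inverts every morphism `f : A ⟶ B` that has a
cokernel pair `B ⊔_A B`. The fold map `B ⊔_A B ⟶ B` is a split epimorphism, hence its own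
cokernel pair is trivial and `F` inverts it; so `F` identifies the two inclusions
`B ⟶ B ⊔_A B`, which become one split monomorphism `m`. Excision applied to the cokernel pair
square then exhibits `F f` as a pullback of `m` along itself, i.e. as an isomorphism.
Applied to `K ⟶ ⊤` this makes `F` isomorphic to the constant functor at `F ⊤`.
-/

open CategoryTheory Limits

namespace CategoryTheory

variable {C D : Type*} [Category C] [Category D]

theorem isIso_fst_of_isPullback_of_mono {P X Z : C} {a b : P ⟶ X} {m : X ⟶ Z}
    (h : IsPullback a b m m) [Mono m] : IsIso a := by
  rw [← h.isoIsPullback_hom_fst _ _ (IsKernelPair.id_of_mono m), Category.comp_id]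
  infer_instance

def Functor.SendsPushoutsToPullbacks (F : C ⥤ D) : Prop :=
  ∀ {P X Y Z : C} (f : P ⟶ X) (g : P ⟶ Y) (h : X ⟶ Z) (k : Y ⟶ Z),
    IsPushout f g h k → IsPullback (F.map f) (F.map g) (F.map h) (F.map k)

namespace Functor.SendsPushoutsToPullbacks

variable {F : C ⥤ D} (hF : F.SendsPushoutsToPullbacks)
include hF

theorem isIso_map_of_epi {A B : C} (f : A ⟶ B) [Epi f] : IsIso (F.map f) := by
  have h := hF f f (𝟙 B) (𝟙 B) ((epi_iff_isPushout f).mp inferInstance)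
  rw [F.map_id] at h
  exact isIso_fst_of_isPullback_of_mono h

theorem map_pushout_inl_eq_map_pushout_inr {A B : C} (f : A ⟶ B) [HasPushout f f] :
    F.map (pushout.inl f f) = F.map (pushout.inr f f) := by
  let fold : pushout f f ⟶ B := pushout.desc (𝟙 B) (𝟙 B) rfl
  have : IsSplitEpi fold := ⟨⟨⟨pushout.inl f f, pushout.inl_desc _ _ _⟩⟩⟩
  have := hF.isIso_map_of_epi fold
  rw [← cancel_mono (F.map fold), ← F.map_comp, ← F.map_comp, pushout.inl_desc,
    pushout.inr_desc]

theorem isIso_map {A B : C} (f : A ⟶ B) [HasPushout f f] : IsIso (F.map f) := by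
  have : IsSplitMono (pushout.inl f f) := ⟨⟨⟨pushout.desc (𝟙 B) (𝟙 B) rfl,
    pushout.inl_desc _ _ _⟩⟩⟩
  have h := hF _ _ _ _ (IsPushout.of_hasPushout f f)
  rw [← hF.map_pushout_inl_eq_map_pushout_inr f] at h
  exact isIso_fst_of_isPullback_of_mono h

end Functor.SendsPushoutsToPullbacks

end CategoryTheory

/-- Let `C` be a category with finite colimits and a terminal object, and let
`F : C ⥤ Type` send every pushout square to a pullback square (i.e. `F` is `1`-excisive with
discrete values).  Then for every object `K` the map `F(K) ⟶ F(⊤)` is a bijection, and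
consequently `F` is isomorphic to the constant functor with value `F(⊤)`. -/
theorem goodwillie_stmt_13 {C : Type*} [Category C] [HasFiniteColimits C] [HasTerminal C]
    (F : C ⥤ Type w)
    (hF : ∀ {P X Y Z : C} (f : P ⟶ X) (g : P ⟶ Y) (h : X ⟶ Z) (k : Y ⟶ Z),
      IsPushout f g h k → IsPullback (F.map f) (F.map g) (F.map h) (F.map k)) :
    (∀ K : C, Function.Bijective (F.map (terminal.from K))) ∧
      Nonempty (F ≅ (Functor.const C).obj (F.obj (⊤_ C))) := by
  have hiso (K : C) : IsIso (F.map (terminal.from K)) :=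
    Functor.SendsPushoutsToPullbacks.isIso_map hF _
  refine ⟨fun K => (isIso_iff_bijective _).mp (hiso K), ⟨NatIso.ofComponents
    (fun K => asIso (F.map (terminal.from K))) fun {K L} f => ?_⟩⟩
  simp [← F.map_comp, terminal.comp_from f]
end

section
/- Let f : X ⟶ B and g : Y ⟶ B be maps of types, and let f ⋆_B g : X ⊔_{X ×_B Y} Y ⟶ B denote the fiberwise join, i.e. the map to B induced from the pushout of the two projections X ⟵ X ×_B Y ⟶ Y. Then for every b : B, the canonical map from the join (fib_b f) ⋆ (fib_b g) of the fibers — i.e. the pushout of fib_b f ⟵ (fib_b f) × (fib_b g) ⟶ fib_b g — to the fiber of f ⋆_B g over b is a bijection. -/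
open CategoryTheory Limits

namespace GoodwillieStmt14

universe u

variable {X Y B : Type u} (f : X → B) (g : Y → B)

/-- The fiber product `X ×_B Y`. -/
def Pb : Type u := {p : X × Y // f p.1 = g p.2}

/-- First projection `X ×_B Y ⟶ X`. -/
def p1 : Pb f g ⟶ X := TypeCat.ofHom fun p => p.1.1

/-- Second projection `X ×_B Y ⟶ Y`. -/
def p2 : Pb f g ⟶ Y := TypeCat.ofHom fun p => p.1.2

/-- The fiberwise join `X ⋆_B Y`: the pushout of the projections `X ⟵ X ×_B Y ⟶ Y`. -/
noncomputable def FJ : Type u := pushout (p1 f g) (p2 f g)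

/-- The canonical map `X ⋆_B Y ⟶ B`. -/
noncomputable def fjMap : FJ f g ⟶ B :=
  pushout.desc (TypeCat.ofHom f) (TypeCat.ofHom g) (by ext p; exact p.2)

lemma fjMap_inl (x : X) :
    fjMap f g (pushout.inl (p1 f g) (p2 f g) x) = f x := by
  change (pushout.inl (p1 f g) (p2 f g) ≫ pushout.desc (TypeCat.ofHom f) (TypeCat.ofHom g) _) x = f x
  rw [pushout.inl_desc]; rfl

lemma fjMap_inr (y : Y) :
    fjMap f g (pushout.inr (p1 f g) (p2 f g) y) = g y := by
  change (pushout.inr (p1 f g) (p2 f g) ≫ pushout.desc (TypeCat.ofHom f) (TypeCat.ofHom g) _) y = g y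
  rw [pushout.inr_desc]; rfl

lemma inl_eq_inr (p : Pb f g) :
    pushout.inl (p1 f g) (p2 f g) p.1.1 = pushout.inr (p1 f g) (p2 f g) p.1.2 := by
  change (p1 f g ≫ pushout.inl (p1 f g) (p2 f g)) p =
    (p2 f g ≫ pushout.inr (p1 f g) (p2 f g)) p
  rw [pushout.condition]

/-- The fiber of a map of types over a point. -/
def Fib {W : Type u} (h : W → B) (b : B) : Type u := {w : W // h w = b}

/-- The join `S ⋆ T` of the fibers `S = fib_b f`, `T = fib_b g`: the pushout of the two
product projections `S ⟵ S × T ⟶ T`. -/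
noncomputable def JoinFib (b : B) : Type u :=
  pushout (show (Fib f b × Fib g b) ⟶ Fib f b from TypeCat.ofHom Prod.fst)
    (show (Fib f b × Fib g b) ⟶ Fib g b from TypeCat.ofHom Prod.snd)

/-- The canonical map from the join of the fibers to the fiber of the fiberwise join. -/
noncomputable def jmap (b : B) : JoinFib f g b ⟶ Fib (fjMap f g) b :=
  pushout.desc
    (TypeCat.ofHom fun x => ⟨pushout.inl (p1 f g) (p2 f g) x.1, by rw [fjMap_inl]; exact x.2⟩)
    (TypeCat.ofHom fun y => ⟨pushout.inr (p1 f g) (p2 f g) y.1, by rw [fjMap_inr]; exact y.2⟩)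
    (by
      ext p
      apply Subtype.ext
      exact inl_eq_inr f g ⟨(p.1.1, p.2.1), p.1.2.trans p.2.2.symm⟩)

/-!
Summed over `b : B`, the joins of the fibers assemble into the fiberwise join: the map
`⟨b, j⟩ ↦ jmap b j` from `Σ b, (fib_b f) ⋆ (fib_b g)` to `X ⋆_B Y` has an inverse given by the
universal property of the pushout, sending `x : X` to `x` seen in the join over `f x` (and
likewise for `Y`); this is compatible with the gluing because a point of `X ×_B Y` over `b` is a
pair of points of the two fibers over `b`. A map over `B` which is bijective on total spaces is
bijective on each fiber.
-/

lemma fib_bijective_of_sigma_bijective {A W : Type*} {P : A → Type*} {h : W → A}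
    (φ : ∀ a, P a → {w // h w = a})
    (hφ : Function.Bijective fun p : Σ a, P a => (φ p.1 p.2).1) (a : A) :
    Function.Bijective (φ a) := by
  refine ⟨fun x y hxy => sigma_mk_injective (hφ.1 (congrArg Subtype.val hxy : _)),
    fun w => ?_⟩
  obtain ⟨⟨a', p⟩, hp⟩ := hφ.2 w.1
  obtain rfl : a' = a := (φ a' p).2.symm.trans ((congrArg h hp).trans w.2)
  exact ⟨p, Subtype.ext hp⟩

lemma pushout_inl_desc_apply {S T U W : Type u} {l : S ⟶ T} {r : S ⟶ U}
    (h : T ⟶ W) (k : U ⟶ W) (w : l ≫ h = r ≫ k) (t : T) :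
    pushout.desc h k w (pushout.inl l r t) = h t :=
  types_congr_hom (pushout.inl_desc h k w) t

lemma pushout_inr_desc_apply {S T U W : Type u} {l : S ⟶ T} {r : S ⟶ U}
    (h : T ⟶ W) (k : U ⟶ W) (w : l ≫ h = r ≫ k) (u : U) :
    pushout.desc h k w (pushout.inr l r u) = k u :=
  types_congr_hom (pushout.inr_desc h k w) u

noncomputable abbrev JoinFib.inl (b : B) : Fib f b ⟶ JoinFib f g b := pushout.inl _ _

noncomputable abbrev JoinFib.inr (b : B) : Fib g b ⟶ JoinFib f g b := pushout.inr _ _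

lemma JoinFib.inl_eq_inr {b : B} (x : Fib f b) (y : Fib g b) :
    JoinFib.inl f g b x = JoinFib.inr f g b y :=
  types_congr_hom pushout.condition (x, y)

lemma sigma_mk_joinFib_inl {b : B} (x : Fib f b) :
    (⟨b, JoinFib.inl f g b x⟩ : Σ b, JoinFib f g b) =
      ⟨f x.1, JoinFib.inl f g (f x.1) ⟨x.1, rfl⟩⟩ := by
  obtain ⟨x, rfl⟩ := x
  rfl

lemma sigma_mk_joinFib_inr {b : B} (y : Fib g b) :
    (⟨b, JoinFib.inr f g b y⟩ : Σ b, JoinFib f g b) =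
      ⟨g y.1, JoinFib.inr f g (g y.1) ⟨y.1, rfl⟩⟩ := by
  obtain ⟨y, rfl⟩ := y
  rfl

noncomputable def sigmaJoinFibToFJ (p : Σ b, JoinFib f g b) : FJ f g := (jmap f g p.1 p.2).1

lemma sigmaJoinFibToFJ_inl {b : B} (x : Fib f b) :
    sigmaJoinFibToFJ f g ⟨b, JoinFib.inl f g b x⟩ = pushout.inl (p1 f g) (p2 f g) x.1 :=
  congrArg Subtype.val (pushout_inl_desc_apply _ _ _ x)

lemma sigmaJoinFibToFJ_inr {b : B} (y : Fib g b) :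
    sigmaJoinFibToFJ f g ⟨b, JoinFib.inr f g b y⟩ = pushout.inr (p1 f g) (p2 f g) y.1 :=
  congrArg Subtype.val (pushout_inr_desc_apply _ _ _ y)

noncomputable def fjToSigmaJoinFib : FJ f g ⟶ Σ b, JoinFib f g b :=
  pushout.desc (TypeCat.ofHom fun x => ⟨f x, JoinFib.inl f g (f x) ⟨x, rfl⟩⟩)
    (TypeCat.ofHom fun y => ⟨g y, JoinFib.inr f g (g y) ⟨y, rfl⟩⟩)
    (ConcreteCategory.hom_ext _ _ fun ⟨⟨x, y⟩, h⟩ =>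
      (sigma_mk_joinFib_inl f g (b := g y) ⟨x, h⟩).symm.trans
        (congrArg (Sigma.mk (g y)) (JoinFib.inl_eq_inr f g _ ⟨y, rfl⟩)))

lemma fjToSigmaJoinFib_inl (x : X) :
    fjToSigmaJoinFib f g (pushout.inl (p1 f g) (p2 f g) x) =
      ⟨f x, JoinFib.inl f g (f x) ⟨x, rfl⟩⟩ :=
  pushout_inl_desc_apply _ _ _ x

lemma fjToSigmaJoinFib_inr (y : Y) :
    fjToSigmaJoinFib f g (pushout.inr (p1 f g) (p2 f g) y) =
      ⟨g y, JoinFib.inr f g (g y) ⟨y, rfl⟩⟩ :=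
  pushout_inr_desc_apply _ _ _ y

noncomputable def sigmaJoinFibEquivFJ : (Σ b, JoinFib f g b) ≃ FJ f g where
  toFun := sigmaJoinFibToFJ f g
  invFun := fjToSigmaJoinFib f g
  left_inv := by
    rintro ⟨b, j⟩
    rcases Types.eq_or_eq_of_isPushout (IsPushout.of_hasPushout _ _) j with ⟨x, rfl⟩ | ⟨y, rfl⟩
    · exact (congrArg (fjToSigmaJoinFib f g) (sigmaJoinFibToFJ_inl f g x)).trans
        ((fjToSigmaJoinFib_inl f g x.1).trans (sigma_mk_joinFib_inl f g x).symm)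
    · exact (congrArg (fjToSigmaJoinFib f g) (sigmaJoinFibToFJ_inr f g y)).trans
        ((fjToSigmaJoinFib_inr f g y.1).trans (sigma_mk_joinFib_inr f g y).symm)
  right_inv z := by
    rcases Types.eq_or_eq_of_isPushout (IsPushout.of_hasPushout _ _) z with ⟨x, rfl⟩ | ⟨y, rfl⟩
    · exact (congrArg (sigmaJoinFibToFJ f g) (fjToSigmaJoinFib_inl f g x)).trans
        (sigmaJoinFibToFJ_inl f g _)
    · exact (congrArg (sigmaJoinFibToFJ f g) (fjToSigmaJoinFib_inr f g y)).trans
        (sigmaJoinFibToFJ_inr f g _)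

/-- For maps of types `f : X ⟶ B` and `g : Y ⟶ B`, and every `b : B`,
the canonical map from the join `(fib_b f) ⋆ (fib_b g)` of the fibers to the fiber of the
fiberwise join `f ⋆_B g : X ⊔_{X ×_B Y} Y ⟶ B` over `b` is a bijection. -/
theorem goodwillie_stmt_14 (b : B) : Function.Bijective (jmap f g b) :=
  fib_bijective_of_sigma_bijective (fun b => jmap f g b) (sigmaJoinFibEquivFJ f g).bijective b

end GoodwillieStmt14
end
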